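/- arXiv:1210.2460 — 3 statements merged into one kernel-verified Lean document; each statement's English description precedes it below -/
import Mathlib

section
/- If a run R is k-upper then R is l-upper for every l with k ≤ l ≤ n. -/
namespace HOPDA

/-- A `k`-stack with data: a 0-stack is a symbol from `Γ` together with an optional
data value from `D` (`none` = no-data); a `(k+1)`-stack is a list of `k`-stacks
(top of the stack is the last element of the list). -/
def Stk (Γ D : Type) : ℕ → Type
  | 0 => Γ × Option D
  | k+1 => List (Stk Γ D k)

variable {Γ D : Type}

def Stk.toList {k : ℕ} (s : Stk Γ D (k+1)) : List (Stk Γ D k) := s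
def Stk.ofList {k : ℕ} (l : List (Stk Γ D k)) : Stk Γ D (k+1) := l
def Stk.toAtom (s : Stk Γ D 0) : Γ × Option D := s
def Stk.ofAtom (x : Γ × Option D) : Stk Γ D 0 := x

/-- Stack operations: `pop k` and `push k α`. -/
inductive Op (Γ : Type) where
  | pop : ℕ → Op Γ
  | push : ℕ → Γ → Op Γ

def Op.level {Γ : Type} : Op Γ → ℕ
  | .pop k => k
  | .push k _ => k

/-- `pop^k`: remove the topmost `(k-1)`-stack of the topmost `k`-stack;
it may only be executed when the topmost `k`-stack has size at least 2. -/
def popAt (k : ℕ) : (n : ℕ) → Stk Γ D n → Option (Stk Γ D n)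
  | 0, _ => none
  | n+1, s =>
    if k = n + 1 then
      if 2 ≤ s.toList.length then some (Stk.ofList s.toList.dropLast) else none
    else
      match s.toList.getLast? with
      | none => none
      | some t => (popAt k n t).map (fun t' => Stk.ofList (s.toList.dropLast.concat t'))

/-- Replace the topmost 0-stack by `x`. -/
def setTop0 (x : Γ × Option D) : (n : ℕ) → Stk Γ D n → Option (Stk Γ D n)
  | 0, _ => some (Stk.ofAtom x)
  | n+1, s =>
    match s.toList.getLast? with
    | none => none
    | some t => (setTop0 x n t).map (fun t' => Stk.ofList (s.toList.dropLast.concat t'))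

/-- `push^k_α` with data `d`: duplicate the topmost `(k-1)`-stack, and replace the
topmost 0-stack of the copy by `(α, d)`. -/
def pushAt (k : ℕ) (α : Γ) (d : Option D) : (n : ℕ) → Stk Γ D n → Option (Stk Γ D n)
  | 0, _ => none
  | n+1, s =>
    if k = n + 1 then
      match s.toList.getLast? with
      | none => none
      | some t => (setTop0 (α, d) n t).map (fun t' => Stk.ofList (s.toList.concat t'))
    else
      match s.toList.getLast? with
      | none => none
      | some t => (pushAt k α d n t).map (fun t' => Stk.ofList (s.toList.dropLast.concat t'))

/-- The topmost 0-stack of a stack. -/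
def top0 : (n : ℕ) → Stk Γ D n → Option (Γ × Option D)
  | 0, s => some s.toAtom
  | n+1, s => s.toList.getLast?.bind (top0 n)

/-- Apply an operation (with read data value `d`, `none` for ε) to an `n`-stack. -/
def applyOp (op : Op Γ) (d : Option D) (n : ℕ) (s : Stk Γ D n) : Option (Stk Γ D n) :=
  match op with
  | .pop k => popAt k n s
  | .push k α => pushAt k α d n s

/-- The address (sequence of indices, counted from the bottom of each stack,
outermost level first) of the topmost `j`-stack of an `n`-stack, if defined. -/
def topAddr : (n : ℕ) → Stk Γ D n → (j : ℕ) → Option (List ℕ)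
  | 0, _, j => if j = 0 then some [] else none
  | n+1, s, j =>
    if j = n + 1 then some [] else
    match s.toList.getLast? with
    | none => none
    | some t => (topAddr n t j).map (fun p => (s.toList.length - 1) :: p)

/-- The size (number of `(r-1)`-stacks) of the topmost `r`-stack. -/
def topLen : (n : ℕ) → Stk Γ D n → (r : ℕ) → Option ℕ
  | 0, _, _ => none
  | n+1, s, r =>
    if r = n + 1 then some s.toList.length
    else s.toList.getLast?.bind (fun t => topLen n t r)

/-- The topmost `j`-stack itself. -/
def topGet : (n : ℕ) → Stk Γ D n → (j : ℕ) → Option (Stk Γ D j)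
  | 0, s, j => if h : j = 0 then some (cast (congrArg (Stk Γ D) h.symm) s) else none
  | n+1, s, j =>
    if h : j = n + 1 then some (cast (congrArg (Stk Γ D) h.symm) s)
    else s.toList.getLast?.bind (fun t => topGet n t j)

/-- Validity of an address in a stack. -/
def validAddr : (n : ℕ) → Stk Γ D n → List ℕ → Prop
  | _, _, [] => True
  | 0, _, _ :: _ => False
  | n+1, s, i :: rest => ∃ h : i < s.toList.length, validAddr n (s.toList.get ⟨i, h⟩) rest

/-- The origin map of one step: given the stack `s` before the operation and the
address of a substack in the stack after the operation, return the address of the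
substack it is a (traced) copy of.  A `pop` does not move any surviving substack;
a `push^r` creates, at the top, a copy of the old topmost `(r-1)`-stack, and
substacks of the copy originate from the corresponding substacks of the source. -/
def originOp {n : ℕ} (op : Op Γ) (s : Stk Γ D n) (a : List ℕ) : List ℕ :=
  match op with
  | .pop _ => a
  | .push r _ =>
    match topAddr n s r, topLen n s r with
    | some p, some L =>
      if a.take (n - r) = p ∧ a[(n - r)]? = some L then a.set (n - r) (L - 1) else a
    | _, _ => a

/-- A run of length `len`: a sequence of stacks connected by operations.
`dat i` is the data value read at step `i` (`none` for no data / ε);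
a `pop` may read a data value only if it equals the one stored in the topmost 0-stack. -/
structure Run (Γ D : Type) (n : ℕ) where
  len : ℕ
  stk : ℕ → Stk Γ D n
  op : ℕ → Op Γ
  dat : ℕ → Option D
  ok : ∀ i < len, applyOp (op i) (dat i) n (stk i) = some (stk (i + 1)) ∧
        (∀ k, op i = Op.pop k → dat i = none ∨ ∃ γ, top0 n (stk i) = some (γ, dat i))

variable {n : ℕ}

/-- Trace an address one step backwards (from configuration `i+1` to configuration `i`). -/
def backStep (R : Run Γ D n) (i : ℕ) (a : List ℕ) : List ℕ :=
  originOp (R.op i) (R.stk i) a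

/-- `backB R i j a`: the address in configuration `i` from which the substack at
address `a` in configuration `j` is traced (for `i ≤ j`). -/
def backB (R : Run Γ D n) (i : ℕ) : ℕ → List ℕ → List ℕ
  | j, a => if h : i < j then backB R i (j - 1) (backStep R (j - 1) a) else a
  termination_by j => j
  decreasing_by omega

/-- `R` is `k`-upper: the topmost `k`-stack of the last configuration is a traced
(possibly modified) copy of the topmost `k`-stack of the first configuration. -/
def Upper (R : Run Γ D n) (k : ℕ) : Prop :=
  ∃ a b, topAddr n (R.stk 0) k = some a ∧ topAddr n (R.stk R.len) k = some b ∧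
    backB R 0 R.len b = a ∧ ∀ i ≤ R.len, validAddr n (R.stk i) (backB R i R.len b)

/-- `R` is a `k`-return: the topmost `(k-1)`-stack of the last configuration is a
traced copy of the second topmost `(k-1)`-stack of the first configuration
(in particular the topmost `k`-stack initially has size at least 2), and while
tracing this copy it is never the topmost `(k-1)`-stack of `R i` for `i < R.len`. -/
def IsReturn (R : Run Γ D n) (k : ℕ) : Prop :=
  ∃ p L b, topAddr n (R.stk 0) k = some p ∧ topLen n (R.stk 0) k = some L ∧ 2 ≤ L ∧
    topAddr n (R.stk R.len) (k - 1) = some b ∧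
    backB R 0 R.len b = p.concat (L - 2) ∧
    (∀ i ≤ R.len, validAddr n (R.stk i) (backB R i R.len b)) ∧
    (∀ i < R.len, topAddr n (R.stk i) (k - 1) ≠ some (backB R i R.len b))

/-- `Splits R S T`: the run `R` is the composition `S ∘ T` of the runs `S` and `T`. -/
def Splits (R S T : Run Γ D n) : Prop :=
  R.len = S.len + T.len ∧ S.stk S.len = T.stk 0 ∧
  (∀ i ≤ S.len, R.stk i = S.stk i) ∧
  (∀ i < S.len, R.op i = S.op i ∧ R.dat i = S.dat i) ∧
  (∀ i ≤ T.len, R.stk (S.len + i) = T.stk i) ∧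
  (∀ i < T.len, R.op (S.len + i) = T.op i ∧ R.dat (S.len + i) = T.dat i)

/-- The run `R` with its first step removed (`R[1..|R|]`). -/
def Run.tail (R : Run Γ D n) : Run Γ D n where
  len := R.len - 1
  stk i := R.stk (i + 1)
  op i := R.op (i + 1)
  dat i := R.dat (i + 1)
  ok i hi := R.ok (i + 1) (by omega)

/-
Truncating the address of the topmost `k`-stack to its first `n - l` entries gives the address of
the enclosing topmost `l`-stack. Tracing commutes with truncation, because the origin map of a
`push^r` rewrites a single entry of an address under a condition on the entries up to that one;
and a prefix of a valid address is valid.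
-/

theorem take_ite_set {α : Type*} [DecidableEq α] (a p : List α) (L v : α) (i m : ℕ) :
    (if (a.take m).take i = p ∧ (a.take m)[i]? = some L then (a.take m).set i v else a.take m)
      = (if a.take i = p ∧ a[i]? = some L then a.set i v else a).take m := by
  rw [apply_ite (List.take m), List.take_set]
  by_cases hm : i < m
  · simp [List.take_take, hm, Nat.min_eq_left hm.le]
  · rw [List.set_eq_of_length_le (by simp; omega), ite_self, ite_self]

theorem originOp_take {n : ℕ} (op : Op Γ) (s : Stk Γ D n) (a : List ℕ) (m : ℕ) :
    originOp op s (a.take m) = (originOp op s a).take m := by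
  rcases op with _ | ⟨r, _⟩
  · rfl
  · simp only [originOp]
    split
    · exact take_ite_set ..
    · rfl

theorem backB_take (R : Run Γ D n) (i j : ℕ) (a : List ℕ) (m : ℕ) :
    backB R i j (a.take m) = (backB R i j a).take m := by
  induction j using Nat.strong_induction_on generalizing a with
  | _ j ih =>
    rw [backB.eq_1 R i j, backB.eq_1 R i j]
    split_ifs
    · rw [backStep, backStep, originOp_take, ih (j - 1) (by omega)]
    · rfl

theorem topAddr_eq_take : ∀ {n : ℕ} (s : Stk Γ D n) {k l : ℕ} {a : List ℕ}, k ≤ l → l ≤ n →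
    topAddr n s k = some a → topAddr n s l = some (a.take (n - l))
  | 0, _, k, l, a, hkl, hln, ha => by
    obtain rfl : l = 0 := by omega
    obtain rfl : k = 0 := by omega
    simp_all [topAddr]
  | n + 1, s, k, l, a, hkl, hln, ha => by
    by_cases hl : l = n + 1
    · simp [topAddr, hl]
    have hk : k ≠ n + 1 := by omega
    simp only [topAddr, hk, hl, if_false] at ha ⊢
    cases ht : s.toList.getLast? with
    | none => simp [ht] at ha
    | some t =>
      simp only [ht, Option.map_eq_some_iff] at ha ⊢
      obtain ⟨a', ha', rfl⟩ := ha
      refine ⟨_, topAddr_eq_take t hkl (by omega) ha', ?_⟩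
      rw [show n + 1 - l = n - l + 1 by omega, List.take_succ_cons]

theorem validAddr_take : ∀ {n : ℕ} (s : Stk Γ D n) {a : List ℕ} (m : ℕ),
    validAddr n s a → validAddr n s (a.take m)
  | _, _, [], _, h => by rwa [List.take_nil]
  | n, _, _ :: _, 0, _ => by cases n <;> trivial
  | n + 1, s, _ :: rest, m + 1, ⟨hi, hv⟩ => ⟨hi, validAddr_take _ m hv⟩

/-- if a run `R` is `k`-upper then `R` is `l`-upper for every `k ≤ l ≤ n`. -/
theorem upper_mono {Γ D : Type} {n : ℕ} (k l : ℕ) (hkl : k ≤ l) (hln : l ≤ n)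
    (R : Run Γ D n) (h : Upper R k) : Upper R l := by
  obtain ⟨a, b, ha, hb, hab, hvalid⟩ := h
  refine ⟨a.take (n - l), b.take (n - l), topAddr_eq_take _ hkl hln ha,
    topAddr_eq_take _ hkl hln hb, by rw [backB_take, hab], fun i hi => ?_⟩
  rw [backB_take]
  exact validAddr_take _ _ (hvalid i hi)

end HOPDA
end

section
/- The symbol ne correctly characterizes nonemptiness: for 1 ≤ k ≤ n, ne ∈ type(s^k) if and only if the k-stack s^k is nonempty; and ne ∉ type(s^0) for every 0-stack s^0. -/
namespace HOPDA

variable {Γ D : Type}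

variable {n : ℕ}

/-- Run descriptors (elements of the sets `T^k`): either the symbol `ne`, or a
tuple `(Ψ, p, (m, r, Σ, q))` consisting of a family of (finite, list-encoded)
sets of run descriptors indexed by level, a state `p`, and a component
`(m, r, Σ, q) ∈ D^k` with `m` an element of the monoid `M`, a level `r`, a
family `Σ` of sets of run descriptors indexed by level, and a state `q`. -/
inductive RD (Q M : Type) : Type where
  | ne : RD Q M
  | mk : (ℕ → List (RD Q M)) → Q → M → ℕ → (ℕ → List (RD Q M)) → Q → RD Q M

/-- `Composer k l Φ Ψ` formalizes Definition 3: `(Φ^k, Φ^{k-1}, …, Φ^l ; Ψ^k)` is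
a composer (`Φ` is the level-indexed family of the sets `Φ^i`, which is empty
outside `l ≤ i ≤ k`). -/
inductive Composer {Q M : Type} : ℕ → ℕ → (ℕ → List (RD Q M)) → List (RD Q M) → Prop where
  /-- Rule 1: for `σ = (Σ^n,…,Σ^{l+1},p,σ̂) ∈ T^l` and
  `τ = (Σ^n,…,Σ^{k+1},p,σ̂) ∈ T^k`, the tuple `(Σ^k,…,Σ^{l+1},{σ}; {τ})` is a
  composer. -/
  | single (k l : ℕ) (hlk : l < k) (Sf : ℕ → List (RD Q M)) (p : Q) (m : M)
      (r : ℕ) (Sg : ℕ → List (RD Q M)) (q : Q) :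
      Composer k l
        (fun i => if i = l then [RD.mk Sf p m r Sg q]
                  else if l + 1 ≤ i ∧ i ≤ k then Sf i else [])
        [RD.mk (fun i => if k + 1 ≤ i then Sf i else []) p m r Sg q]
  /-- Rule 2: `(∅,…,∅; {ne})` is a composer. -/
  | empt (k l : ℕ) (hlk : l < k) : Composer k l (fun _ => []) [RD.ne]
  /-- Rule 3: unions of composers. -/
  | union (k l : ℕ) (Ψ : List (RD Q M)) (Φf : RD Q M → ℕ → List (RD Q M)) :
      (∀ τ ∈ Ψ, Composer k l (Φf τ) [τ]) →
      Composer k l (fun i => Ψ.flatMap (fun τ => Φf τ i)) Ψ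

/-- `TypeS type0 k s σ` means `σ ∈ type(s)` for the `k`-stack `s`, where
`type0` is the type assignment of 0-stacks (Definition 4) and types of higher
stacks are given by Definition 5: `σ ∈ type(t^k : t^{k-1})` iff there is a
composer `(Φ^k, Φ^{k-1}; {σ})` with `Φ^k ⊆ type(t^k)` and
`Φ^{k-1} ⊆ type(t^{k-1})`. -/
inductive TypeS {Γ D Q M : Type} (type0 : Γ → Option D → RD Q M → Prop) :
    (k : ℕ) → Stk Γ D k → RD Q M → Prop where
  | base (γ : Γ) (d : Option D) (σ : RD Q M) :
      type0 γ d σ → TypeS type0 0 (Stk.ofAtom (γ, d)) σ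
  | comp (k : ℕ) (lst : List (Stk Γ D k)) (t : Stk Γ D k)
      (Φ : ℕ → List (RD Q M)) (σ : RD Q M) :
      Composer (k + 1) k Φ [σ] →
      (∀ i, ¬(i = k ∨ i = k + 1) → Φ i = []) →
      (∀ τ ∈ Φ (k + 1), TypeS type0 (k + 1) (Stk.ofList lst) τ) →
      (∀ τ ∈ Φ k, TypeS type0 k t τ) →
      TypeS type0 (k + 1) (Stk.ofList (lst.concat t)) σ

/-- The composed stack `s^{l+j} : s^{l+j-1} : … : s^l` (with the convention
`s^{i+1} : s^i` = append `s^i` on top of `s^{i+1}`, associated to the right). -/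
def comb (s : (i : ℕ) → Stk Γ D i) (l : ℕ) : (j : ℕ) → Stk Γ D (l + j)
  | 0 => s l
  | j+1 => Stk.ofList ((s (l + j + 1)).toList.concat (comb s l j))

/-! Every type of a `(k+1)`-stack is produced by Definition 5 from a decomposition
`t^{k+1} : t^k`, so only nonempty stacks have types at all; conversely the empty
composer `(∅, ∅; {ne})` yields `ne` for any such decomposition without constraining
the parts. -/

section
variable {Q M : Type} {type0 : Γ → Option D → RD Q M → Prop}

theorem TypeS.toList_ne_nil {k : ℕ} {s : Stk Γ D (k + 1)} {σ : RD Q M}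
    (h : TypeS type0 (k + 1) s σ) : s.toList ≠ [] := by
  cases h
  simp [Stk.toList, Stk.ofList]

theorem typeS_ne_of_ne_nil {k : ℕ} {lst : List (Stk Γ D k)} (hlst : lst ≠ []) :
    TypeS type0 (k + 1) (Stk.ofList lst) RD.ne := by
  rw [← List.dropLast_concat_getLast hlst, ← List.concat_eq_append]
  exact TypeS.comp k _ _ (fun _ => []) RD.ne (Composer.empt (k + 1) k k.lt_succ_self)
    (fun _ _ => rfl) (by simp) (by simp)

theorem not_typeS_zero_ne (h0 : ∀ γ d, ¬ type0 γ d RD.ne) (s0 : Stk Γ D 0) :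
    ¬ TypeS type0 0 s0 RD.ne := by
  rintro ⟨γ, d, _, hγ⟩
  exact h0 γ d hγ

end

/-- the symbol `ne` correctly characterizes nonemptiness:
for `k ≥ 1`, `ne ∈ type(s^k)` iff the `k`-stack `s^k` is nonempty, and
`ne ∉ type(s^0)` for every 0-stack (given that, as in Definition 4, no rule for
0-stacks introduces `ne`). -/
theorem ne_characterizes_nonempty {Γ D Q M : Type}
    (type0 : Γ → Option D → RD Q M → Prop)
    (h0 : ∀ γ d, ¬ type0 γ d RD.ne) :
    (∀ (k : ℕ) (lst : List (Stk Γ D k)),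
      TypeS type0 (k + 1) (Stk.ofList lst) RD.ne ↔ lst ≠ []) ∧
    (∀ s0 : Stk Γ D 0, ¬ TypeS type0 0 s0 RD.ne) := by
  exact ⟨fun _ _ => ⟨TypeS.toList_ne_nil, typeS_ne_of_ne_nil⟩, not_typeS_zero_ne h0⟩

end HOPDA
end

section
/- A normalized k-upper run cannot introduce excluded data values into the topmost k-stack: if R is a normalized k-upper run (every non-ε push transition of R reads the distinguished data value 0), d ∈ D \ {0} is not read by R and does not appear in the topmost k-stack s^k of R's initial configuration, then d does not appear in the topmost k-stack t^k of R's final configuration. -/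
namespace HOPDA

variable {Γ D : Type}

variable {n : ℕ}

/-- The data value `d` appears somewhere in a stack. -/
inductive Appears (d : D) : (k : ℕ) → Stk Γ D k → Prop where
  | base (γ : Γ) : Appears d 0 (Stk.ofAtom (γ, some d))
  | step {k : ℕ} (t : Stk Γ D k) (l : List (Stk Γ D k)) :
      t ∈ l → Appears d k t → Appears d (k+1) (Stk.ofList l)

/-! The substack of the final topmost `k`-stack at any address is traced back, step by step,
to a substack of an earlier configuration, ending in the initial topmost `k`-stack.  The
invariant "`d` does not occur in the substack at the traced address" survives every step
forwards: a pop only deletes substacks, a `push^r` copies the topmost `(r-1)`-stack (the origin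
map `originOp` points the copy back at its source) and writes into the copy only the data value
read by that step, which is not `d`. -/

@[simp] theorem Stk.toList_ofList {k : ℕ} (l : List (Stk Γ D k)) : (Stk.ofList l).toList = l :=
  rfl

theorem Stk.eq_ofList_nil_or_append {k : ℕ} (s : Stk Γ D (k + 1)) :
    s = Stk.ofList [] ∨ ∃ l u, s = Stk.ofList (l ++ [u]) :=
  List.eq_nil_or_concat' s.toList

theorem appears_ofList_iff {d : D} {k : ℕ} {l : List (Stk Γ D k)} :
    Appears d (k + 1) (Stk.ofList l) ↔ ∃ t ∈ l, Appears d k t := by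
  constructor
  · intro h
    cases h with
    | step t _ ht hA => exact ⟨t, ht, hA⟩
  · rintro ⟨t, ht, hA⟩
    exact .step t l ht hA

theorem appears_ofAtom_iff {d : D} {x : Γ × Option D} :
    Appears d 0 (Stk.ofAtom x) ↔ x.2 = some d := by
  constructor
  · rintro ⟨γ⟩
    rfl
  · obtain ⟨γ, _⟩ := x
    rintro rfl
    exact .base γ

/-- `d` does not appear in the substack of `s` at address `a`; vacuously true when `a` is not
a valid address of `s`. -/
def AvoidsAt (d : D) : (n : ℕ) → Stk Γ D n → List ℕ → Prop
  | n, s, [] => ¬ Appears d n s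
  | 0, _, _ :: _ => True
  | n + 1, s, i :: a => ∀ h : i < s.toList.length, AvoidsAt d n (s.toList[i]'h) a

@[simp] theorem avoidsAt_nil {d : D} {n : ℕ} (s : Stk Γ D n) :
    AvoidsAt d n s [] ↔ ¬ Appears d n s := by
  cases n <;> rfl

@[simp] theorem avoidsAt_ofList_cons {d : D} {n : ℕ} (l : List (Stk Γ D n)) (i : ℕ)
    (a : List ℕ) :
    AvoidsAt d (n + 1) (Stk.ofList l) (i :: a) ↔ ∀ h : i < l.length, AvoidsAt d n l[i] a :=
  Iff.rfl

theorem avoidsAt_ofList_of_isPrefix {d : D} {n : ℕ} {l₁ l₂ : List (Stk Γ D n)} (h : l₁ <+: l₂)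
    (a : List ℕ) (ha : AvoidsAt d (n + 1) (Stk.ofList l₂) a) :
    AvoidsAt d (n + 1) (Stk.ofList l₁) a := by
  cases a with
  | nil =>
    simp only [avoidsAt_nil, appears_ofList_iff] at ha ⊢
    exact fun ⟨t, ht, hA⟩ => ha ⟨t, h.subset ht, hA⟩
  | cons i a =>
    simp only [avoidsAt_ofList_cons] at ha ⊢
    intro hi
    rw [h.getElem hi]
    exact ha (lt_of_lt_of_le hi h.length_le)

/-- The origin map at level `n + 1` induced by an origin map `f` acting inside child `j`. -/
def liftOrigin (j : ℕ) (f : List ℕ → List ℕ) : List ℕ → List ℕ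
  | [] => []
  | i :: a => if i = j then i :: f a else i :: a

theorem liftOrigin_id (j : ℕ) (a : List ℕ) : liftOrigin j id a = a := by
  cases a with
  | nil => rfl
  | cons i a => by_cases h : i = j <;> simp [liftOrigin, h]

theorem avoidsAt_ofList_append_singleton {d : D} {n : ℕ} {l : List (Stk Γ D n)}
    {u u' : Stk Γ D n} {f : List ℕ → List ℕ} (hf : f [] = [])
    (hu : ∀ a, AvoidsAt d n u (f a) → AvoidsAt d n u' a) (a : List ℕ)
    (ha : AvoidsAt d (n + 1) (Stk.ofList (l ++ [u])) (liftOrigin l.length f a)) :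
    AvoidsAt d (n + 1) (Stk.ofList (l ++ [u'])) a := by
  cases a with
  | nil =>
    simp only [liftOrigin, avoidsAt_nil, appears_ofList_iff, List.mem_append,
      List.mem_singleton] at ha ⊢
    have hu' : ¬ Appears d n u' := by
      simpa using hu [] (by rw [hf, avoidsAt_nil]; exact fun hA => ha ⟨u, .inr rfl, hA⟩)
    rintro ⟨t, ht | rfl, hA⟩
    exacts [ha ⟨t, .inl ht, hA⟩, hu' hA]
  | cons i a =>
    simp only [avoidsAt_ofList_cons]
    intro hi
    by_cases hil : i = l.length
    · subst hil
      simpa [liftOrigin] using hu a (by simpa [liftOrigin] using ha)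
    · have hi' : i < l.length := by simp at hi; omega
      simp only [liftOrigin, hil, if_false, avoidsAt_ofList_cons] at ha
      have := ha (by simp; omega)
      rwa [List.getElem_append_left hi'] at this ⊢

theorem avoidsAt_ofList_append_singleton_of_forall {d : D} {n : ℕ} {l : List (Stk Γ D n)}
    {u u' : Stk Γ D n} (hu : ∀ a, AvoidsAt d n u a → AvoidsAt d n u' a) (a : List ℕ)
    (ha : AvoidsAt d (n + 1) (Stk.ofList (l ++ [u])) a) :
    AvoidsAt d (n + 1) (Stk.ofList (l ++ [u'])) a :=
  avoidsAt_ofList_append_singleton (f := id) rfl hu a (by rwa [liftOrigin_id])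

theorem avoidsAt_setTop0 {d : D} {x : Γ × Option D} (hx : x.2 ≠ some d) :
    ∀ {n : ℕ} {t t' : Stk Γ D n}, setTop0 x n t = some t' →
      ∀ a, AvoidsAt d n t a → AvoidsAt d n t' a
  | 0, _, _, h, [], _ => by
    simp only [setTop0, Option.some.injEq] at h
    simpa [← h, appears_ofAtom_iff] using hx
  | 0, _, _, _, _ :: _, _ => trivial
  | n + 1, t, t', h, a, ha => by
    rcases t.eq_ofList_nil_or_append with rfl | ⟨l, u, rfl⟩
    · simp [setTop0] at h
    · obtain ⟨u', hu', rfl⟩ : ∃ u', setTop0 x n u = some u' ∧ Stk.ofList (l ++ [u']) = t' := by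
        simpa [setTop0] using h
      exact avoidsAt_ofList_append_singleton_of_forall (avoidsAt_setTop0 hx hu') a ha

theorem avoidsAt_popAt {d : D} {k : ℕ} :
    ∀ {n : ℕ} {s s' : Stk Γ D n}, popAt k n s = some s' →
      ∀ a, AvoidsAt d n s a → AvoidsAt d n s' a
  | 0, _, _, h, _, _ => by simp [popAt] at h
  | n + 1, s, s', h, a, ha => by
    rcases s.eq_ofList_nil_or_append with rfl | ⟨l, u, rfl⟩
    · simp [popAt] at h
    by_cases hk : k = n + 1
    · obtain ⟨-, rfl⟩ : 1 ≤ l.length ∧ Stk.ofList l = s' := by simpa [popAt, hk] using h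
      exact avoidsAt_ofList_of_isPrefix (List.prefix_append l [u]) a ha
    · obtain ⟨u', hu', rfl⟩ : ∃ u', popAt k n u = some u' ∧ Stk.ofList (l ++ [u']) = s' := by
        simpa [popAt, hk] using h
      exact avoidsAt_ofList_append_singleton_of_forall (avoidsAt_popAt hu') a ha

theorem topAddr_le {j : ℕ} : ∀ {n : ℕ} {s : Stk Γ D n} {p : List ℕ},
    topAddr n s j = some p → j ≤ n
  | 0, _, _, h => by
    by_cases hj : j = 0
    · exact hj.le
    · simp [topAddr, hj] at h
  | n + 1, s, _, h => by
    by_cases hj : j = n + 1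
    · exact hj.le
    rcases s.eq_ofList_nil_or_append with rfl | ⟨l, u, rfl⟩
    · simp [topAddr, hj] at h
    · obtain ⟨p, hp, -⟩ : ∃ p, topAddr n u j = some p ∧ _ := by simpa [topAddr, hj] using h
      exact (topAddr_le hp).trans n.le_succ

theorem exists_topAddr_topLen_of_pushAt {r : ℕ} {α : Γ} {dd : Option D} :
    ∀ {n : ℕ} {s s' : Stk Γ D n}, pushAt r α dd n s = some s' →
      ∃ p L, topAddr n s r = some p ∧ topLen n s r = some L
  | 0, _, _, h => by simp [pushAt] at h
  | n + 1, s, _, h => by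
    by_cases hr : r = n + 1
    · exact ⟨[], s.toList.length, by simp [topAddr, hr], by simp [topLen, hr]⟩
    rcases s.eq_ofList_nil_or_append with rfl | ⟨l, u, rfl⟩
    · simp [pushAt, hr] at h
    · obtain ⟨u', hu', -⟩ : ∃ u', pushAt r α dd n u = some u' ∧ _ := by
        simpa [pushAt, hr] using h
      obtain ⟨p, L, hp, hL⟩ := exists_topAddr_topLen_of_pushAt hu'
      exact ⟨l.length :: p, L, by simp [topAddr, hr, hp], by simp [topLen, hr, hL]⟩

/-- `originOp (.push r α) s` when the topmost `r`-stack of the `n`-stack `s` has address `p`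
and size `L`, with `m = n - r` (`originOp_push`). -/
def copyOrigin (m : ℕ) (p : List ℕ) (L : ℕ) (a : List ℕ) : List ℕ :=
  if a.take m = p ∧ a[m]? = some L then a.set m (L - 1) else a

theorem originOp_push {n r L : ℕ} {α : Γ} {s : Stk Γ D n} {p : List ℕ}
    (hp : topAddr n s r = some p) (hL : topLen n s r = some L) :
    originOp (.push r α) s = copyOrigin (n - r) p L := by
  funext a
  simp [originOp, hp, hL, copyOrigin]

theorem copyOrigin_nil (m : ℕ) (p : List ℕ) (L : ℕ) : copyOrigin m p L [] = [] := by
  simp [copyOrigin]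

theorem copyOrigin_succ_cons (m j : ℕ) (p : List ℕ) (L : ℕ) :
    copyOrigin (m + 1) (j :: p) L = liftOrigin j (copyOrigin m p L) := by
  funext a
  cases a with
  | nil => simp [copyOrigin, liftOrigin]
  | cons i a =>
    by_cases h : i = j
    · subst h
      simp only [copyOrigin, liftOrigin, if_true, List.take_succ_cons, List.cons.injEq, true_and,
        List.getElem?_cons_succ]
      split_ifs <;> rfl
    · simp [copyOrigin, liftOrigin, h]

theorem avoidsAt_ofList_append_dup {d : D} {n : ℕ} (l : List (Stk Γ D n)) (u : Stk Γ D n)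
    (a : List ℕ)
    (ha : AvoidsAt d (n + 1) (Stk.ofList (l ++ [u])) (copyOrigin 0 [] (l.length + 1) a)) :
    AvoidsAt d (n + 1) (Stk.ofList (l ++ [u] ++ [u])) a := by
  cases a with
  | nil =>
    simp only [copyOrigin_nil, avoidsAt_nil, appears_ofList_iff, List.mem_append,
      List.mem_singleton] at ha ⊢
    rintro ⟨t, ht | rfl, hA⟩
    exacts [ha ⟨t, ht, hA⟩, ha ⟨t, .inr rfl, hA⟩]
  | cons i a =>
    simp only [avoidsAt_ofList_cons]
    intro hi
    by_cases hil : i = l.length + 1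
    · subst hil
      simpa [copyOrigin] using ha
    · have hi' : i < (l ++ [u]).length := by simp at hi ⊢; omega
      simp only [copyOrigin, hil, List.take_zero, List.getElem?_cons_zero, Option.some.injEq,
        and_false, if_false, avoidsAt_ofList_cons] at ha
      rw [List.getElem_append_left hi']
      exact ha hi'

theorem avoidsAt_pushAt {d : D} {r : ℕ} {α : Γ} {dd : Option D} (hdd : dd ≠ some d) :
    ∀ {n : ℕ} {s s' : Stk Γ D n} {p : List ℕ} {L : ℕ}, pushAt r α dd n s = some s' →
      topAddr n s r = some p → topLen n s r = some L →
      ∀ a, AvoidsAt d n s (copyOrigin (n - r) p L a) → AvoidsAt d n s' a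
  | 0, _, _, _, _, h, _, _, _, _ => by simp [pushAt] at h
  | n + 1, s, s', p, L, h, hp, hL, a, ha => by
    rcases s.eq_ofList_nil_or_append with rfl | ⟨l, u, rfl⟩
    · simp [pushAt] at h
    by_cases hr : r = n + 1
    · subst hr
      obtain rfl : [] = p := by simpa [topAddr] using hp
      obtain rfl : l.length + 1 = L := by simpa [topLen] using hL
      obtain ⟨u', hu', rfl⟩ :
          ∃ u', setTop0 (α, dd) n u = some u' ∧ Stk.ofList (l ++ [u] ++ [u']) = s' := by
        simpa [pushAt] using h
      exact avoidsAt_ofList_append_singleton_of_forall (avoidsAt_setTop0 hdd hu') a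
        (avoidsAt_ofList_append_dup l u a (by simpa using ha))
    · obtain ⟨p₀, hp₀, rfl⟩ : ∃ p₀, topAddr n u r = some p₀ ∧ l.length :: p₀ = p := by
        simpa [topAddr, hr] using hp
      have hL₀ : topLen n u r = some L := by simpa [topLen, hr] using hL
      obtain ⟨u', hu', rfl⟩ :
          ∃ u', pushAt r α dd n u = some u' ∧ Stk.ofList (l ++ [u']) = s' := by
        simpa [pushAt, hr] using h
      rw [show n + 1 - r = n - r + 1 by have := topAddr_le hp₀; omega,
        copyOrigin_succ_cons] at ha
      exact avoidsAt_ofList_append_singleton (copyOrigin_nil _ _ _)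
        (avoidsAt_pushAt hdd hu' hp₀ hL₀) a ha

theorem avoidsAt_applyOp {d : D} {op : Op Γ} {dd : Option D} {n : ℕ} {s s' : Stk Γ D n}
    (hdd : dd ≠ some d) (h : applyOp op dd n s = some s') (a : List ℕ)
    (ha : AvoidsAt d n s (originOp op s a)) : AvoidsAt d n s' a := by
  cases op with
  | pop k => exact avoidsAt_popAt h a ha
  | push r α =>
    obtain ⟨p, L, hp, hL⟩ := exists_topAddr_topLen_of_pushAt h
    rw [originOp_push hp hL] at ha
    exact avoidsAt_pushAt hdd h hp hL a ha

theorem backB_self (R : Run Γ D n) (i : ℕ) (a : List ℕ) : backB R i i a = a := by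
  rw [backB, dif_neg (lt_irrefl i)]

theorem backB_succ (R : Run Γ D n) {i j : ℕ} (h : i ≤ j) (a : List ℕ) :
    backB R i (j + 1) a = backB R i j (backStep R j a) := by
  rw [backB, dif_pos (Nat.lt_succ_of_le h)]
  rfl

theorem Run.avoidsAt_of_avoidsAt_backB {d : D} (R : Run Γ D n)
    (hR : ∀ m < R.len, R.dat m ≠ some d) {i j : ℕ} (hij : i ≤ j) (hj : j ≤ R.len)
    (a : List ℕ) (ha : AvoidsAt d n (R.stk i) (backB R i j a)) : AvoidsAt d n (R.stk j) a := by
  induction j, hij using Nat.le_induction generalizing a with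
  | base => rwa [backB_self] at ha
  | succ j hij ih =>
    rw [backB_succ R hij] at ha
    exact avoidsAt_applyOp (hR j hj) (R.ok j hj).1 a (ih (Nat.le_of_succ_le hj) _ ha)

theorem avoidsAt_topAddr_iff {d : D} {j : ℕ} {X : Stk Γ D j} :
    ∀ {n : ℕ} {s : Stk Γ D n} {p : List ℕ}, topAddr n s j = some p → topGet n s j = some X →
      (AvoidsAt d n s p ↔ ¬ Appears d j X)
  | 0, s, p, hp, hX => by
    by_cases hj : j = 0
    · subst hj
      obtain rfl : [] = p := by simpa [topAddr] using hp
      obtain rfl : s = X := by simpa [topGet] using hX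
      exact avoidsAt_nil s
    · simp [topAddr, hj] at hp
  | n + 1, s, p, hp, hX => by
    by_cases hj : j = n + 1
    · subst hj
      obtain rfl : [] = p := by simpa [topAddr] using hp
      obtain rfl : s = X := by simpa [topGet] using hX
      exact avoidsAt_nil s
    rcases s.eq_ofList_nil_or_append with rfl | ⟨l, u, rfl⟩
    · simp [topAddr, hj] at hp
    · obtain ⟨p₀, hp₀, rfl⟩ : ∃ p₀, topAddr n u j = some p₀ ∧ l.length :: p₀ = p := by
        simpa [topAddr, hj] using hp
      have hX₀ : topGet n u j = some X := by simpa [topGet, hj] using hX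
      simpa using avoidsAt_topAddr_iff hp₀ hX₀

theorem normalized_upper_no_new_data_general {Γ D : Type} {n : ℕ} (k : ℕ)
    (R : Run Γ D n) (d : D)
    (hupper : Upper R k)
    (hnread : ∀ i < R.len, R.dat i ≠ some d)
    (s t : Stk Γ D k)
    (hs : topGet n (R.stk 0) k = some s) (ht : topGet n (R.stk R.len) k = some t)
    (hnot : ¬ Appears d k s) : ¬ Appears d k t := by
  obtain ⟨a, b, ha, hb, hback, -⟩ := hupper
  rw [← avoidsAt_topAddr_iff hb ht]
  refine R.avoidsAt_of_avoidsAt_backB hnread (Nat.zero_le _) le_rfl b ?_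
  rwa [hback, avoidsAt_topAddr_iff ha hs]

/-- a normalized `k`-upper run cannot introduce excluded data values
into the topmost `k`-stack.  `d0` is the distinguished data value `0`; `R` is
normalized when every data-reading (non-ε) `push` of `R` reads `d0`; if
`d ≠ d0` is not read by `R` and does not appear in the topmost `k`-stack of the
initial configuration, then it does not appear in the topmost `k`-stack of the
final configuration. -/
theorem normalized_upper_no_new_data {Γ D : Type} {n : ℕ} (k : ℕ) (hkn : k ≤ n)
    (R : Run Γ D n) (d0 d : D) (hd : d ≠ d0)
    (hupper : Upper R k)
    (hnorm : ∀ i < R.len, (∃ r α, R.op i = Op.push r α) →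
      (R.dat i = none ∨ R.dat i = some d0))
    (hnread : ∀ i < R.len, R.dat i ≠ some d)
    (s t : Stk Γ D k)
    (hs : topGet n (R.stk 0) k = some s) (ht : topGet n (R.stk R.len) k = some t)
    (hnot : ¬ Appears d k s) : ¬ Appears d k t :=
  normalized_upper_no_new_data_general k R d hupper hnread s t hs ht hnot

end HOPDA
end
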